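/- arXiv:2507.07723 — 2 statements merged into one kernel-verified Lean document; each statement's English description precedes it below -/
import Mathlib

section
/- (Theorem 1, preferred sample.) Let E be a real Hilbert space, p_w, p_l : E → ℝ differentiable at θ with p_w(θ) > 0 and p_l(θ) > 0, β > 0, η > 0, r ∈ ℝ, σ(t) = 1/(1+exp(−t)), z = β(log p_w(θ) − log p_l(θ) − r), and L(θ') = −log σ(β(log p_w(θ') − log p_l(θ') − r)). Let Δθ = −η · grad L(θ) be one gradient step. Then the first-order change of the preferred probability satisfies ⟪grad p_w(θ), Δθ⟫ = η β (1−σ(z)) · p_w(θ) · (‖g_w‖² − ⟪g_w, g_l⟫), where g_w = grad(log∘p_w)(θ) and g_l = grad(log∘p_l)(θ). -/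
open RealInnerProductSpace

/-!
Write `m(θ) = β (log p_w θ - log p_l θ - r)` for the DPO margin, so that `L = -log ∘ σ ∘ m`.
Since `(-log ∘ σ)' = σ - 1`, the chain rule gives `∇L(θ) = -(1 - σ(z)) β (g_w - g_l)`, and
`∇(log ∘ p_w) = ∇p_w / p_w` gives `∇p_w(θ) = p_w(θ) g_w`. The claim is the inner product of
these two vectors, scaled by `-η`.
-/

open Real

namespace HasGradientAt

variable {F : Type*} [NormedAddCommGroup F] [InnerProductSpace ℝ F] [CompleteSpace F]
  {f f₁ : F → ℝ} {g g₁ x : F}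

theorem _root_.HasDerivAt.comp_hasGradientAt {φ : ℝ → ℝ} {φ' : ℝ} (hφ : HasDerivAt φ φ' (f x))
    (hf : HasGradientAt f g x) : HasGradientAt (fun y => φ (f y)) (φ' • g) x := by
  rw [hasGradientAt_iff_hasFDerivAt, map_smul]
  exact hφ.comp_hasFDerivAt x (hasGradientAt_iff_hasFDerivAt.mp hf)

theorem sub (hf : HasGradientAt f g x) (hf₁ : HasGradientAt f₁ g₁ x) :
    HasGradientAt (fun y => f y - f₁ y) (g - g₁) x := by
  rw [hasGradientAt_iff_hasFDerivAt, map_sub]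
  exact (hasGradientAt_iff_hasFDerivAt.mp hf).sub (hasGradientAt_iff_hasFDerivAt.mp hf₁)

theorem sub_const (hf : HasGradientAt f g x) (c : ℝ) :
    HasGradientAt (fun y => f y - c) g x := by
  simpa using ((hasDerivAt_id (f x)).sub_const c).comp_hasGradientAt hf

theorem const_mul (hf : HasGradientAt f g x) (c : ℝ) :
    HasGradientAt (fun y => c * f y) (c • g) x := by
  simpa using ((hasDerivAt_id (f x)).const_mul c).comp_hasGradientAt hf

theorem log (hf : HasGradientAt f g x) (hx : f x ≠ 0) :
    HasGradientAt (fun y => Real.log (f y)) ((f x)⁻¹ • g) x :=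
  (hasDerivAt_log hx).comp_hasGradientAt hf

end HasGradientAt

theorem Real.hasDerivAt_neg_log_sigmoid (t : ℝ) :
    HasDerivAt (fun s => -log (sigmoid s)) (sigmoid t - 1) t := by
  have h := (hasDerivAt_sigmoid t).log (sigmoid_pos t).ne'
  rw [mul_div_cancel_left₀ _ (sigmoid_pos t).ne'] at h
  simpa only [neg_sub, Pi.neg_def] using h.neg

theorem dpo_preferred_probability_update_general
    {E : Type*} [NormedAddCommGroup E] [InnerProductSpace ℝ E] [CompleteSpace E]
    (p_w p_l : E → ℝ) (θ : E)
    (hw : DifferentiableAt ℝ p_w θ) (hl : DifferentiableAt ℝ p_l θ)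
    (hwpos : 0 < p_w θ) (hlpos : 0 < p_l θ)
    (β η r : ℝ)
    (σ : ℝ → ℝ) (hσ : ∀ t, σ t = 1 / (1 + Real.exp (-t)))
    (z : ℝ) (hz : z = β * (Real.log (p_w θ) - Real.log (p_l θ) - r))
    (L : E → ℝ)
    (hL : ∀ θ', L θ' = -Real.log (σ (β * (Real.log (p_w θ') - Real.log (p_l θ') - r))))
    (Δθ : E) (hΔθ : Δθ = (-η) • gradient L θ)
    (g_w g_l : E)
    (hgw : g_w = gradient (fun θ' => Real.log (p_w θ')) θ)
    (hgl : g_l = gradient (fun θ' => Real.log (p_l θ')) θ) :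
    ⟪gradient p_w θ, Δθ⟫ =
      η * β * (1 - σ z) * p_w θ * (‖g_w‖ ^ 2 - ⟪g_w, g_l⟫) := by
  obtain rfl : σ = sigmoid := funext fun t => by rw [hσ, one_div, sigmoid_def]
  have hlog_w := hw.hasGradientAt.log hwpos.ne'
  have hlog_l := hl.hasGradientAt.log hlpos.ne'
  have hgrad_w : gradient p_w θ = p_w θ • g_w := by
    rw [hgw, hlog_w.gradient, smul_smul, mul_inv_cancel₀ hwpos.ne', one_smul]
  have hmargin := ((hlog_w.sub hlog_l).sub_const r).const_mul β
  rw [← hlog_w.gradient, ← hgw, ← hlog_l.gradient, ← hgl] at hmargin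
  have hgrad_L : gradient L θ = (sigmoid z - 1) • β • (g_w - g_l) := by
    rw [funext hL, hz]
    exact ((hasDerivAt_neg_log_sigmoid _).comp_hasGradientAt hmargin).gradient
  rw [hΔθ, hgrad_L, hgrad_w, smul_smul, smul_smul, real_inner_smul_left, real_inner_smul_right,
    inner_sub_right, real_inner_self_eq_norm_sq]
  ring

/-- Theorem 1 (preferred sample): after one DPO gradient step `Δθ = -η • ∇L(θ)`,
the first-order change of the preferred probability equals
`η β (1-σ(z)) p_w(θ) (‖g_w‖² - ⟪g_w, g_l⟫)`. -/
theorem dpo_preferred_probability_update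
    {E : Type*} [NormedAddCommGroup E] [InnerProductSpace ℝ E] [CompleteSpace E]
    (p_w p_l : E → ℝ) (θ : E)
    (hw : DifferentiableAt ℝ p_w θ) (hl : DifferentiableAt ℝ p_l θ)
    (hwpos : 0 < p_w θ) (hlpos : 0 < p_l θ)
    (β η r : ℝ) (hβ : 0 < β) (hη : 0 < η)
    (σ : ℝ → ℝ) (hσ : ∀ t, σ t = 1 / (1 + Real.exp (-t)))
    (z : ℝ) (hz : z = β * (Real.log (p_w θ) - Real.log (p_l θ) - r))
    (L : E → ℝ)
    (hL : ∀ θ', L θ' = -Real.log (σ (β * (Real.log (p_w θ') - Real.log (p_l θ') - r))))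
    (Δθ : E) (hΔθ : Δθ = (-η) • gradient L θ)
    (g_w g_l : E)
    (hgw : g_w = gradient (fun θ' => Real.log (p_w θ')) θ)
    (hgl : g_l = gradient (fun θ' => Real.log (p_l θ')) θ) :
    ⟪gradient p_w θ, Δθ⟫ =
      η * β * (1 - σ z) * p_w θ * (‖g_w‖ ^ 2 - ⟪g_w, g_l⟫) :=
  dpo_preferred_probability_update_general p_w p_l θ hw hl hwpos hlpos β η r σ hσ z hz L hL Δθ hΔθ
    g_w g_l hgw hgl
end

section
/- (Theorem 2, Case 1: simultaneous decrease.) If ‖g_w‖² < ⟪g_w, g_l⟫, then both first-order probability changes are negative: Δ_w < 0 and Δ_l < 0. -/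
open RealInnerProductSpace

/-- Theorem 2, Case 1 (simultaneous decrease): if `‖g_w‖² < ⟪g_w, g_l⟫` then
both first-order probability changes are negative: `Δ_w < 0` and `Δ_l < 0`. -/
theorem dpo_simultaneous_decrease
    {E : Type*} [NormedAddCommGroup E] [InnerProductSpace ℝ E]
    (g_w g_l : E) (π_w π_l c : ℝ)
    (hπw : 0 < π_w) (hπl : 0 < π_l) (hc : 0 < c)
    (h : ‖g_w‖ ^ 2 < ⟪g_w, g_l⟫)
    (Δ_w Δ_l : ℝ)
    (hΔw : Δ_w = c * π_w * (‖g_w‖ ^ 2 - ⟪g_w, g_l⟫))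
    (hΔl : Δ_l = c * π_l * (⟪g_w, g_l⟫ - ‖g_l‖ ^ 2)) :
    Δ_w < 0 ∧ Δ_l < 0 := by
  have hcs : ⟪g_w, g_l⟫ ≤ ‖g_w‖ * ‖g_l‖ := real_inner_le_norm g_w g_l
  have hw0 : 0 < ‖g_w‖ := by
    by_contra hn
    have : ‖g_w‖ = 0 := le_antisymm (not_lt.mp hn) (norm_nonneg _)
    have hgw : g_w = 0 := norm_eq_zero.mp this
    simp [hgw, this] at h
  have hwl : ‖g_w‖ < ‖g_l‖ := by
    nlinarith [norm_nonneg g_l]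
  have h2 : ⟪g_w, g_l⟫ < ‖g_l‖ ^ 2 := by nlinarith
  constructor
  · rw [hΔw]
    exact mul_neg_of_pos_of_neg (mul_pos hc hπw) (by linarith)
  · rw [hΔl]
    exact mul_neg_of_pos_of_neg (mul_pos hc hπl) (by linarith)
end
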